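/- arXiv:1912.07463 — 5 statements merged into one kernel-verified Lean document; each statement's English description precedes it below -/
import Mathlib

section
/- Let G be a finite group with normal subgroup N and subgroup A such that G = NA. Suppose A is normally embedded in G, i.e., for each prime p and each Sylow p-subgroup P of A there is a normal subgroup M of G with P a Sylow p-subgroup of M. Then for every a ∈ A, the subgroup N⟨a⟩ ∩ A is normally embedded in N⟨a⟩. -/
/-- `P` is a Sylow `p`-subgroup of the subgroup `M` (all inside an ambient group `G`):
it is a `p`-subgroup of `M` that is maximal among `p`-subgroups of `M`. -/
def IsSylowIn {G : Type*} [Group G] (p : ℕ) (P M : Subgroup G) : Prop :=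
  P ≤ M ∧ IsPGroup p P ∧ ∀ Q : Subgroup G, Q ≤ M → IsPGroup p Q → P ≤ Q → Q = P

/-- `H` is normally embedded in the subgroup `K`: for each prime `p`, every Sylow
`p`-subgroup of `H` is a Sylow `p`-subgroup of some normal subgroup of `K`. -/
def NormallyEmbeddedIn {G : Type*} [Group G] (H K : Subgroup G) : Prop :=
  H ≤ K ∧ ∀ p : ℕ, p.Prime → ∀ P : Subgroup G, IsSylowIn p P H →
    ∃ M : Subgroup G, M ≤ K ∧ (M.subgroupOf K).Normal ∧ IsSylowIn p P M

open Subgroup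

section Aux

variable {G : Type*} [Group G]

lemma normal_of_subgroupOf_top {M : Subgroup G}
    (h : (M.subgroupOf (⊤ : Subgroup G)).Normal) : M.Normal := by
  constructor
  intro n hn g
  have := h.conj_mem ⟨n, trivial⟩ (by simpa [Subgroup.mem_subgroupOf] using hn) ⟨g, trivial⟩
  simpa [Subgroup.mem_subgroupOf] using this

variable [Finite G]

open scoped Pointwise in
lemma card_mul_card_inf (S T : Subgroup G) :
    Nat.card (↑S * ↑T : Set G) * Nat.card (S ⊓ T : Subgroup G) =
      Nat.card S * Nat.card T := by
  rw [Subgroup.card_mul_eq_card_subgroup_mul_card_quotient T (S : Set G)]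
  have hrel : ∀ a b : S, QuotientGroup.leftRel (T.subgroupOf S) a b →
      QuotientGroup.leftRel T (a : G) (b : G) := by
    intro a b h
    rw [QuotientGroup.leftRel_apply] at h ⊢
    simpa [Subgroup.mem_subgroupOf] using h
  set f : S ⧸ T.subgroupOf S → G ⧸ T := Quotient.map' Subtype.val hrel with hf
  have hfinj : Function.Injective f := by
    intro x y
    induction x using Quotient.inductionOn' with
    | h a =>
      induction y using Quotient.inductionOn' with
      | h b =>
        intro h
        rw [hf, Quotient.map'_mk'', Quotient.map'_mk''] at h
        apply Quotient.sound'
        have := Quotient.exact' h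
        rw [QuotientGroup.leftRel_apply] at this ⊢
        simpa [Subgroup.mem_subgroupOf] using this
  have hrange : Set.range f = ((S : Set G)).image ((↑) : G → G ⧸ T) := by
    ext q
    constructor
    · rintro ⟨x, rfl⟩
      induction x using Quotient.inductionOn' with
      | h a => exact ⟨(a : G), a.2, rfl⟩
    · rintro ⟨g, hg, rfl⟩
      exact ⟨Quotient.mk'' ⟨g, hg⟩, rfl⟩
  have h1 : Nat.card (S ⧸ T.subgroupOf S) =
      Nat.card (((S : Set G)).image ((↑) : G → G ⧸ T)) := by
    rw [← hrange]
    exact Nat.card_congr (Equiv.ofInjective f hfinj)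
  have h2 : Nat.card S = Nat.card (S ⧸ T.subgroupOf S) * Nat.card (T.subgroupOf S) :=
    Subgroup.card_eq_card_quotient_mul_card_subgroup _
  have h3 : Nat.card (T.subgroupOf S) = Nat.card (S ⊓ T : Subgroup G) := by
    rw [← Subgroup.inf_subgroupOf_right T S, inf_comm]
    exact Nat.card_congr (Subgroup.subgroupOfEquivOfLe inf_le_left).toEquiv
  rw [← h1, ← h3]
  rw [h2]
  ring

open scoped Pointwise in
lemma card_mul_card_inf_of_cover (S T : Subgroup G)
    (hcov : ∀ g : G, ∃ s ∈ S, ∃ t ∈ T, g = s * t) :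
    Nat.card G * Nat.card (S ⊓ T : Subgroup G) = Nat.card S * Nat.card T := by
  have h := card_mul_card_inf S T
  have huniv : (↑S * ↑T : Set G) = Set.univ := by
    ext g
    simp only [Set.mem_univ, iff_true]
    obtain ⟨s, hs, t, ht, rfl⟩ := hcov g
    exact Set.mul_mem_mul hs ht
  rw [huniv] at h
  rwa [show Nat.card (Set.univ : Set G) = Nat.card G from
    Nat.card_congr (Equiv.Set.univ G)] at h

open scoped Pointwise in
lemma card_sup_mul_card_inf (M L : Subgroup G) (hM : M.Normal) :
    Nat.card (M ⊔ L : Subgroup G) * Nat.card (M ⊓ L : Subgroup G) =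
      Nat.card M * Nat.card L := by
  have h := card_mul_card_inf M L
  haveI := hM
  rwa [← Subgroup.normal_mul M L] at h

lemma isSylowIn_iff {p : ℕ} [Fact p.Prime] {P M : Subgroup G} :
    IsSylowIn p P M ↔
      P ≤ M ∧ IsPGroup p P ∧ Nat.card P = p ^ (Nat.card M).factorization p := by
  constructor
  · rintro ⟨hPM, hP, hmax⟩
    refine ⟨hPM, hP, ?_⟩
    have hP' : IsPGroup p (P.subgroupOf M) :=
      hP.comap_of_injective M.subtype Subtype.coe_injective
    obtain ⟨Q, hQ⟩ := hP'.exists_le_sylow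
    have hQ' : (Q : Subgroup M).map M.subtype ≤ M := map_subtype_le _
    have hmap : IsPGroup p ((Q : Subgroup M).map M.subtype) := Q.isPGroup'.map _
    have hPle : P ≤ (Q : Subgroup M).map M.subtype := by
      have := Subgroup.map_mono (f := M.subtype) hQ
      rwa [Subgroup.subgroupOf_map_subtype, inf_of_le_left hPM] at this
    have heq := hmax _ hQ' hmap hPle
    have hcardQ : Nat.card ((Q : Subgroup M).map M.subtype) = Nat.card (Q : Subgroup M) :=
      (Nat.card_congr (Subgroup.equivMapOfInjective _ _ Subtype.coe_injective).toEquiv).symm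
    rw [← heq, hcardQ]
    simpa using Q.card_eq_multiplicity
  · rintro ⟨hPM, hP, hcard⟩
    refine ⟨hPM, hP, fun Q hQM hQ hPQ => ?_⟩
    obtain ⟨m, hm⟩ := IsPGroup.iff_card.mp (hQ)
    have hdvd : Nat.card Q ∣ Nat.card M := Subgroup.card_dvd_of_le hQM
    have hM0 : Nat.card M ≠ 0 := Nat.card_pos.ne'
    have hle : m ≤ (Nat.card M).factorization p :=
      (Nat.Prime.pow_dvd_iff_le_factorization Fact.out hM0).mp (hm ▸ hdvd)
    have hcardle : Nat.card Q ≤ Nat.card P := by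
      rw [hm, hcard]
      exact Nat.pow_le_pow_right (Nat.Prime.pos Fact.out) hle
    exact (Subgroup.eq_of_le_of_card_ge hPQ hcardle).symm

end Aux

theorem stmt_6 {G : Type*} [Group G] [Finite G] (N A : Subgroup G) (hN : N.Normal)
    (hG : ∀ g : G, ∃ n ∈ N, ∃ a ∈ A, g = n * a)
    (hA : NormallyEmbeddedIn A ⊤) :
    ∀ a ∈ A, NormallyEmbeddedIn ((N ⊔ Subgroup.closure {a}) ⊓ A)
      (N ⊔ Subgroup.closure {a}) := by
  intro a ha
  set L : Subgroup G := N ⊔ Subgroup.closure {a} with hL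
  have hNL : N ≤ L := le_sup_left
  have hLA_cover : ∀ g : G, ∃ s ∈ L, ∃ t ∈ A, g = s * t := by
    intro g
    obtain ⟨n, hn, b, hb, rfl⟩ := hG g
    exact ⟨n, hNL hn, b, hb, rfl⟩
  refine ⟨inf_le_left, ?_⟩
  intro p hp P hPsyl
  haveI : Fact p.Prime := ⟨hp⟩
  have hPA : P ≤ A := hPsyl.1.trans inf_le_right
  have hPp : IsPGroup p P := hPsyl.2.1
  have hPA' : IsPGroup p (P.subgroupOf A) :=
    hPp.comap_of_injective A.subtype Subtype.coe_injective
  obtain ⟨S₀, hS₀⟩ := hPA'.exists_le_sylow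
  set S : Subgroup G := (S₀ : Subgroup A).map A.subtype with hSdef
  have hSA : S ≤ A := map_subtype_le _
  have hSp : IsPGroup p S := S₀.isPGroup'.map _
  have hPS : P ≤ S := by
    have := Subgroup.map_mono (f := A.subtype) hS₀
    rwa [Subgroup.subgroupOf_map_subtype, inf_of_le_left hPA] at this
  have hScard : Nat.card S = p ^ (Nat.card A).factorization p := by
    rw [show Nat.card S = Nat.card (S₀ : Subgroup A) from
      (Nat.card_congr (Subgroup.equivMapOfInjective _ _ Subtype.coe_injective).toEquiv).symm]
    simpa using S₀.card_eq_multiplicity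
  have hSsylA : IsSylowIn p S A := isSylowIn_iff.mpr ⟨hSA, hSp, hScard⟩
  obtain ⟨M, -, hMnormTop, hSsylM⟩ := hA.2 p hp S hSsylA
  have hMnorm : M.Normal := normal_of_subgroupOf_top hMnormTop
  have hSM : S ≤ M := hSsylM.1
  have hMScard : Nat.card S = p ^ (Nat.card M).factorization p :=
    (isSylowIn_iff.mp hSsylM).2.2
  -- numeric bookkeeping
  have pos : ∀ X : Subgroup G, Nat.card X ≠ 0 := fun X => Nat.card_pos.ne'
  have hG0 : Nat.card G ≠ 0 := Nat.card_pos.ne'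
  have fmul : ∀ x y : ℕ, x ≠ 0 → y ≠ 0 →
      (x * y).factorization p = x.factorization p + y.factorization p := by
    intro x y hx hy
    rw [Nat.factorization_mul hx hy, Finsupp.add_apply]
  have e1 := card_mul_card_inf_of_cover L A hLA_cover
  have e2 := card_mul_card_inf_of_cover (M ⊔ L) A (by
    intro g
    obtain ⟨s, hs, t, ht, rfl⟩ := hLA_cover g
    exact ⟨s, (le_sup_right : L ≤ M ⊔ L) hs, t, ht, rfl⟩)
  have e3 := card_sup_mul_card_inf M L hMnorm
  have f1 : (Nat.card G).factorization p + (Nat.card (L ⊓ A : Subgroup G)).factorization p =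
      (Nat.card L).factorization p + (Nat.card A).factorization p := by
    rw [← fmul _ _ hG0 (pos _), ← fmul _ _ (pos _) (pos _), e1]
  have f2 : (Nat.card G).factorization p +
      (Nat.card ((M ⊔ L) ⊓ A : Subgroup G)).factorization p =
      (Nat.card (M ⊔ L : Subgroup G)).factorization p + (Nat.card A).factorization p := by
    rw [← fmul _ _ hG0 (pos _), ← fmul _ _ (pos _) (pos _), e2]
  have f3 : (Nat.card (M ⊔ L : Subgroup G)).factorization p +
      (Nat.card (M ⊓ L : Subgroup G)).factorization p =
      (Nat.card M).factorization p + (Nat.card L).factorization p := by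
    rw [← fmul _ _ (pos _) (pos _), ← fmul _ _ (pos _) (pos _), e3]
  have hMA : (Nat.card M).factorization p = (Nat.card A).factorization p :=
    Nat.pow_right_injective hp.two_le (hMScard.symm.trans hScard)
  have iK : (Nat.card (M ⊔ L : Subgroup G)).factorization p ≤
      (Nat.card G).factorization p := by
    refine (Nat.Prime.pow_dvd_iff_le_factorization hp hG0).mp ?_
    exact dvd_trans (Nat.ordProj_dvd _ p) (Subgroup.card_subgroup_dvd_card _)
  have iA : (Nat.card A).factorization p ≤
      (Nat.card ((M ⊔ L) ⊓ A : Subgroup G)).factorization p := by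
    refine (Nat.Prime.pow_dvd_iff_le_factorization hp (pos _)).mp ?_
    rw [← hScard]
    exact Subgroup.card_dvd_of_le (le_inf (hSM.trans le_sup_left) hSA)
  have key : (Nat.card (M ⊓ L : Subgroup G)).factorization p =
      (Nat.card (L ⊓ A : Subgroup G)).factorization p := by omega
  have cP : Nat.card P = p ^ (Nat.card (L ⊓ A : Subgroup G)).factorization p :=
    (isSylowIn_iff.mp hPsyl).2.2
  refine ⟨M ⊓ L, inf_le_right, ?_, ?_⟩
  · rw [Subgroup.inf_subgroupOf_right]
    exact hMnorm.subgroupOf L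
  · exact isSylowIn_iff.mpr
      ⟨le_inf (hPS.trans hSM) (hPsyl.1.trans inf_le_left), hPp, by rw [cP, key]⟩
end

section
/- Let G be a finite group, N a normal subgroup, M a normal subgroup, and let M_p be a Sylow p-subgroup of M. Then N ∩ M_p is a Sylow p-subgroup of N ∩ M. -/
/-!
If `K ⊴ M` and `P` is Sylow in `M`, then `K ⊓ P` is Sylow in `K`: a `p`-subgroup `Q` of `K`
containing `K ⊓ P` lies in some `M`-conjugate `Pᵐ` by Sylow's second theorem, hence in
`K ⊓ Pᵐ = (K ⊓ P)ᵐ`, which is no larger than `K ⊓ P`. Apply this with `K = N ⊓ M`.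
-/

namespace IsSylowIn

open Pointwise

variable {G : Type*} [Group G] {p : ℕ} {P M : Subgroup G}

def toSylow (h : IsSylowIn p P M) : Sylow p M where
  toSubgroup := P.subgroupOf M
  isPGroup' := h.2.1.comap_of_injective M.subtype M.subtype_injective
  is_maximal' {Q} hQ hPQ := by
    have hPQ' : P ≤ Q.map M.subtype := by
      simpa only [Subgroup.map_subgroupOf_eq_of_le h.1] using Subgroup.map_mono (f := M.subtype) hPQ
    have hmap : Q.map M.subtype = P :=
      h.2.2 _ (Subgroup.map_subtype_le Q) (hQ.map M.subtype) hPQ'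
    rw [← hmap, ← Subgroup.comap_subtype,
      Subgroup.comap_map_eq_self_of_injective M.subtype_injective]

theorem coe_toSylow (h : IsSylowIn p P M) : (h.toSylow : Subgroup M) = P.subgroupOf M := rfl

theorem exists_le_conj [Finite G] [Fact p.Prime] (h : IsSylowIn p P M) {Q : Subgroup G}
    (hQM : Q ≤ M) (hQ : IsPGroup p Q) : ∃ m ∈ M, Q ≤ MulAut.conj m • P := by
  obtain ⟨T, hQT⟩ := (hQ.comap_of_injective M.subtype M.subtype_injective).exists_le_sylow
  obtain ⟨m, rfl⟩ := MulAction.exists_smul_eq M h.toSylow T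
  refine ⟨m, m.2, fun x hx => ?_⟩
  have hxT : (⟨x, hQM hx⟩ : M) ∈ ((m • h.toSylow : Sylow p M) : Subgroup M) := hQT hx
  rwa [Sylow.coe_subgroup_smul, coe_toSylow, Subgroup.conj_smul_subgroupOf h.1,
    Subgroup.mem_subgroupOf] at hxT

theorem inf_of_le_normalizer [Finite G] [Fact p.Prime] (h : IsSylowIn p P M) {K : Subgroup G}
    (hKM : K ≤ M) (hMK : M ≤ Subgroup.normalizer (K : Set G)) : IsSylowIn p (K ⊓ P) K := by
  refine ⟨inf_le_left, h.2.1.to_inf_right, fun Q hQK hQ hPQ => ?_⟩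
  obtain ⟨m, hm, hQP⟩ := h.exists_le_conj (hQK.trans hKM) hQ
  have hconjK : MulAut.conj m • K = K := by
    rw [Subgroup.pointwise_smul_def]
    exact Subgroup.mem_normalizer_iff_map_conj_eq.mp (hMK hm)
  have hQ_le : Q ≤ MulAut.conj m • (K ⊓ P) := by
    rw [Subgroup.smul_inf, hconjK]
    exact le_inf hQK hQP
  have hcard : Nat.card Q ≤ Nat.card (K ⊓ P : Subgroup G) :=
    (Subgroup.card_le_of_le hQ_le).trans_eq
      (Nat.card_congr (Subgroup.equivSMul (MulAut.conj m) (K ⊓ P)).toEquiv).symm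
  exact (Subgroup.eq_of_le_of_card_ge hPQ hcard).symm

end IsSylowIn

theorem stmt_7_general {G : Type*} [Group G] [Finite G] (p : ℕ) (hp : p.Prime)
    (N M Mp : Subgroup G) (hN : N.Normal)
    (hMp : IsSylowIn p Mp M) :
    IsSylowIn p (N ⊓ Mp) (N ⊓ M) := by
  have : Fact p.Prime := ⟨hp⟩
  have hM_normalizes : M ≤ Subgroup.normalizer ((N ⊓ M : Subgroup G) : Set G) :=
    (le_inf Subgroup.le_normalizer_of_normal Subgroup.le_normalizer).trans
      Subgroup.inf_normalizer_le_normalizer_inf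
  have hsylow := hMp.inf_of_le_normalizer inf_le_right hM_normalizes
  rwa [inf_assoc, inf_eq_right.mpr hMp.1] at hsylow

theorem stmt_7 {G : Type*} [Group G] [Finite G] (p : ℕ) (hp : p.Prime)
    (N M Mp : Subgroup G) (hN : N.Normal) (hM : M.Normal)
    (hMp : IsSylowIn p Mp M) :
    IsSylowIn p (N ⊓ Mp) (N ⊓ M) :=
  stmt_7_general p hp N M Mp hN hMp
end

section
/- Let G be a finite group with subgroups A and B of coprime indices such that G = AB and [A, B] solvable. Set N = B·R where R is the solvable radical of G. Then for any a ∈ A, the subgroups N⟨a⟩ ∩ A and B have coprime indices in the subgroup N⟨a⟩. -/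
/-!
Modulo the solvable radical `R`, the images of `A` and `B` commute, so `A` normalizes `N = BR`
and `N` is normal in `G = AB`. Put `M = N⟨a⟩`. Since `B ≤ M`, `|M : B|` divides `|G : B|`.
Since `⟨a⟩ ≤ A` and `N` is normal, `|M : M ∩ A| = |N : N ∩ A| = |NA : A|`, which divides `|G : A|`.
-/

/-- The solvable radical: the join of all solvable normal subgroups. -/
def solvableRadical (G : Type*) [Group G] : Subgroup G :=
  ⨆ N : {N : Subgroup G // N.Normal ∧ IsSolvable N}, (N : Subgroup G)

open commutatorElement

namespace Subgroup

variable {G : Type*} [Group G]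

theorem sup_eq_top_of_forall_exists_mul {A B : Subgroup G}
    (h : ∀ g : G, ∃ a ∈ A, ∃ b ∈ B, g = a * b) : A ⊔ B = ⊤ := by
  refine eq_top_iff.2 fun g _ => ?_
  obtain ⟨a, ha, b, hb, rfl⟩ := h g
  exact mul_mem (mem_sup_left ha) (mem_sup_right hb)

theorem le_normalizer_sup_of_commutator_le {H K N : Subgroup G} [hN : N.Normal]
    (h : ⁅H, K⁆ ≤ N) : H ≤ normalizer ((K ⊔ N : Subgroup G) : Set G) := by
  rw [le_normalizer_iff]
  intro x hx k hk
  rw [← SetLike.mem_coe, mul_normal] at hk ⊢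
  obtain ⟨b, hb, r, hr, rfl⟩ := hk
  -- `x * (b * r) * x⁻¹ = b * ⁅b⁻¹, x⁆ * (x * r * x⁻¹)`
  refine ⟨b, hb, ⁅b⁻¹, x⁆ * (x * r * x⁻¹), ?_, by group⟩
  have hbx : ⁅b⁻¹, x⁆ ∈ N := by
    rw [← inv_mem_iff, commutatorElement_inv]
    exact h (commutator_mem_commutator hx (inv_mem hb))
  exact mul_mem hbx (hN.conj_mem r hr x)

theorem normal_sup_of_commutator_le {A B N : Subgroup G} [N.Normal] (hAB : A ⊔ B = ⊤)
    (h : ⁅A, B⁆ ≤ N) : (B ⊔ N).Normal := by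
  rw [← normalizer_eq_top_iff, eq_top_iff, ← hAB]
  exact sup_le (le_normalizer_sup_of_commutator_le h) (le_sup_left.trans le_normalizer)

theorem relIndex_normal_sup_self [Finite G] (N K : Subgroup G) [N.Normal] :
    K.relIndex (N ⊔ K) = K.relIndex N := by
  have hK : (N ⊓ K).relIndex K * K.relIndex (N ⊔ K) = (N ⊓ K).relIndex (N ⊔ K) :=
    relIndex_mul_relIndex _ _ _ inf_le_right le_sup_right
  have hN : (N ⊓ K).relIndex N * N.relIndex (N ⊔ K) = (N ⊓ K).relIndex (N ⊔ K) :=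
    relIndex_mul_relIndex _ _ _ inf_le_left le_sup_left
  rw [relIndex_sup_left, ← inf_relIndex_right N K, inf_relIndex_left, mul_comm] at hN
  exact Nat.eq_of_mul_eq_mul_left (Nat.pos_of_ne_zero index_ne_zero_of_finite) (hK.trans hN.symm)

theorem relIndex_normal_sup_of_le [Finite G] {N L A : Subgroup G} [N.Normal] (hL : L ≤ A) :
    A.relIndex (N ⊔ L) = A.relIndex N := by
  set M := N ⊔ L
  have hM : N ⊔ (M ⊓ A) = M :=
    le_antisymm (sup_le le_sup_left inf_le_left) (sup_le_sup_left (le_inf le_sup_right hL) N)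
  have hM_A : (M ⊓ A).relIndex M = (M ⊓ A).relIndex N := by
    simpa only [hM] using relIndex_normal_sup_self N (M ⊓ A)
  have hM_N : M ⊓ A ⊓ N = A ⊓ N := by
    rw [inf_right_comm, inf_of_le_right (le_sup_left : N ≤ M), inf_comm]
  rw [← inf_relIndex_left, hM_A, ← inf_relIndex_right, hM_N, inf_relIndex_right]

theorem relIndex_normal_sup_dvd_index [Finite G] {N L A : Subgroup G} [N.Normal] (hL : L ≤ A) :
    A.relIndex (N ⊔ L) ∣ A.index := by
  rw [relIndex_normal_sup_of_le hL, ← relIndex_normal_sup_of_le (le_refl A)]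
  exact relIndex_dvd_index_of_le le_sup_right

end Subgroup

open Subgroup

theorem solvableRadical_normal (G : Type*) [Group G] : (solvableRadical G).Normal :=
  @iSup_normal G _ _ _ fun N => N.2.1

theorem stmt_8 {G : Type*} [Group G] [Finite G] (A B : Subgroup G)
    (hG : ∀ g : G, ∃ a ∈ A, ∃ b ∈ B, g = a * b)
    (hcop : Nat.Coprime A.index B.index)
    (hcomm : ⁅A, B⁆ ≤ solvableRadical G) :
    ∀ a ∈ A,
      Nat.Coprime
        (B.relIndex (B ⊔ solvableRadical G ⊔ Subgroup.closure {a}))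
        (((B ⊔ solvableRadical G ⊔ Subgroup.closure {a}) ⊓ A).relIndex
          (B ⊔ solvableRadical G ⊔ Subgroup.closure {a})) := by
  intro a ha
  have := solvableRadical_normal G
  have := normal_sup_of_commutator_le (sup_eq_top_of_forall_exists_mul hG) hcomm
  have hB : B.relIndex (B ⊔ solvableRadical G ⊔ closure {a}) ∣ B.index :=
    relIndex_dvd_index_of_le (le_sup_left.trans le_sup_left)
  have hA : ((B ⊔ solvableRadical G ⊔ closure {a}) ⊓ A).relIndex
      (B ⊔ solvableRadical G ⊔ closure {a}) ∣ A.index := by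
    rw [inf_relIndex_left]
    exact relIndex_normal_sup_dvd_index ((closure_le A).2 (Set.singleton_subset_iff.2 ha))
  exact (hcop.symm.coprime_dvd_left hB).coprime_dvd_right hA
end

section
/- Let G = AB be a finite group which is the product of subgroups A and B such that ⟨a, b⟩ is nilpotent for all a ∈ A and b ∈ B. Then A ∩ B is contained in the hypercenter of G. -/
/-!
It suffices to treat a `p`-element `x ∈ A ∩ B`, since the elements of prime-power order in `⟨x⟩`
generate it. In a finite nilpotent group a `p`-element commutes with every `p'`-element, so
N-connectedness makes the `p`-elements of `A` commute with the `p'`-elements of `B` and vice versa.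
Let `D` be generated by the `p'`-elements of `A` and of `B`. Then `D` centralizes `x`; `D` is normal,
because conjugating by `a = a_{p'} a_p` only the factor `a_{p'} ∈ D` acts; and `G / D` is a
`p`-group, because `ab ≡ a_p b_p` modulo `D` and `⟨a_p, b_p⟩` is nilpotent and generated by
`p`-elements. Hence `G = DP` for a Sylow `p`-subgroup `P ∋ x`, the normal closure `N` of `x` lies in
`P`, and `G = C_G(N) P`. Therefore `[N, G] = [N, P]`, which is properly smaller than `N` unless
`N = 1`, and induction on `|N|` puts `N` into the hypercenter.
-/

section

open Subgroup
open scoped commutatorElement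

variable {G : Type*} [Group G]

theorem exists_eq_mul_of_pow_mul_eq_one_of_coprime (g : G) {m n : ℕ} (hmn : m.Coprime n)
    (hg : g ^ (m * n) = 1) :
    ∃ y ∈ zpowers g, ∃ z ∈ zpowers g, g = y * z ∧ y ^ m = 1 ∧ z ^ n = 1 := by
  have hbez : (n : ℤ) * Nat.gcdB m n + m * Nat.gcdA m n = 1 := by
    have := Nat.gcd_eq_gcd_ab m n
    rw [hmn.gcd_eq_one, Nat.cast_one] at this
    linarith
  have hpow : ∀ c : ℤ, g ^ (c * (m * n : ℕ)) = 1 := fun c => by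
    rw [mul_comm, zpow_mul, zpow_natCast, hg, one_zpow]
  refine ⟨g ^ ((n : ℤ) * Nat.gcdB m n), ⟨_, rfl⟩, g ^ ((m : ℤ) * Nat.gcdA m n), ⟨_, rfl⟩,
    by rw [← zpow_add, hbez, zpow_one], ?_, ?_⟩
  · rw [← zpow_natCast, ← zpow_mul, ← hpow (Nat.gcdB m n)]
    push_cast
    ring_nf
  · rw [← zpow_natCast, ← zpow_mul, ← hpow (Nat.gcdA m n)]
    push_cast
    ring_nf

theorem IsOfFinOrder.exists_eq_mul_of_prime {g : G} (hg : IsOfFinOrder g) {p : ℕ} (hp : p.Prime) :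
    ∃ z ∈ zpowers g, ∃ y ∈ zpowers g, g = z * y ∧ ¬ p ∣ orderOf z ∧ ∃ k, y ^ p ^ k = 1 := by
  have hn := hg.orderOf_pos.ne'
  obtain ⟨z, hz, y, hy, hgzy, hz1, hy1⟩ := exists_eq_mul_of_pow_mul_eq_one_of_coprime g
    ((Nat.coprime_ordCompl hp hn).pow_left ((orderOf g).factorization p)).symm
    (by rw [mul_comm, Nat.ordProj_mul_ordCompl_eq_self, pow_orderOf_eq_one])
  exact ⟨z, hz, y, hy, hgzy,
    fun hpz => Nat.not_dvd_ordCompl hp hn (hpz.trans (orderOf_dvd_of_pow_eq_one hz1)), _, hy1⟩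

theorem Subgroup.mem_of_forall_primePow_mem [Finite G] {K : Subgroup G} {g : G}
    (hK : ∀ p k : ℕ, p.Prime → ∀ y ∈ zpowers g, y ^ p ^ k = 1 → y ∈ K) : g ∈ K := by
  induction hn : orderOf g using Nat.strong_induction_on generalizing g with
  | _ n ih =>
  by_cases hg1 : orderOf g = 1
  · rw [orderOf_eq_one_iff.mp hg1]
    exact K.one_mem
  obtain ⟨p, hp, hpg⟩ := Nat.exists_prime_and_dvd hg1
  obtain ⟨z, hz, y, hy, rfl, hpz, k, hyk⟩ := (isOfFinOrder_of_finite g).exists_eq_mul_of_prime hp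
  have hzn : orderOf z < n := hn ▸ lt_of_le_of_ne
    (Nat.le_of_dvd (orderOf_pos _) (orderOf_dvd_of_mem_zpowers hz)) fun h => hpz (h ▸ hpg)
  exact K.mul_mem
    (ih _ hzn (fun q l hq w hw => hK q l hq w (zpowers_le.mpr hz hw)) rfl) (hK p k hp y hy hyk)

theorem isPGroup_zpowers_of_pow_eq_one {p k : ℕ} {x : G} (hx : x ^ p ^ k = 1) :
    IsPGroup p (zpowers x) :=
  IsPGroup.of_card_dvd_pow (by rw [Nat.card_zpowers]; exact orderOf_dvd_of_pow_eq_one hx)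

theorem Sylow.mem_of_pow_eq_one [Finite G] {p : ℕ} [Fact p.Prime] (P : Sylow p G)
    [(P : Subgroup G).Normal] {k : ℕ} {x : G} (hx : x ^ p ^ k = 1) : x ∈ P := by
  obtain ⟨Q, hQ⟩ := (isPGroup_zpowers_of_pow_eq_one hx).exists_le_sylow
  have := Sylow.unique_of_normal P ‹_›
  exact Subsingleton.elim Q P ▸ hQ (mem_zpowers x)

theorem commute_of_pow_eq_one_of_not_dvd [Finite G] [Group.IsNilpotent G] {p k : ℕ}
    (hp : p.Prime) {a b : G} (ha : a ^ p ^ k = 1) (hb : ¬ p ∣ orderOf b) : Commute a b := by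
  have := Fact.mk hp
  obtain ⟨P⟩ : Nonempty (Sylow p G) := inferInstance
  suffices b ∈ centralizer {a} from (mem_centralizer_singleton_iff.mp this).symm
  refine mem_of_forall_primePow_mem fun q l hq w hw hwl => ?_
  have hpw : ¬ p ∣ orderOf w := fun h => hb (h.trans (orderOf_dvd_of_mem_zpowers hw))
  obtain rfl | hpq := eq_or_ne p q
  · have hw1 : orderOf w = 1 := Nat.Coprime.eq_one_of_dvd
      (Nat.Coprime.pow_left l ((hp.coprime_iff_not_dvd).2 hpw)).symm
      (orderOf_dvd_of_pow_eq_one hwl)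
    rw [orderOf_eq_one_iff.mp hw1]
    exact one_mem _
  · have := Fact.mk hq
    obtain ⟨Q⟩ : Nonempty (Sylow q G) := inferInstance
    exact mem_centralizer_singleton_iff.mpr (commute_of_normal_of_disjoint P Q inferInstance
      inferInstance (IsPGroup.disjoint_of_ne p q hpq (P : Subgroup G) Q P.isPGroup' Q.isPGroup') a w
      (P.mem_of_pow_eq_one ha) (Q.mem_of_pow_eq_one hwl)).symm

theorem commute_of_isNilpotent_closure_pair [Finite G] {p k : ℕ} (hp : p.Prime) {a b : G}
    (hnil : Group.IsNilpotent (closure {a, b})) (ha : a ^ p ^ k = 1) (hb : ¬ p ∣ orderOf b) :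
    Commute a b := by
  have h := commute_of_pow_eq_one_of_not_dvd (G := closure {a, b}) hp
    (a := ⟨a, subset_closure (by simp)⟩) (b := ⟨b, subset_closure (by simp)⟩)
    (Subtype.ext (by simpa using ha)) (by rwa [orderOf_mk])
  exact h.map (closure {a, b}).subtype

theorem isPGroup_closure_of_isNilpotent [Finite G] {p : ℕ} [Fact p.Prime] {S : Set G}
    (hS : ∀ s ∈ S, ∃ k, s ^ p ^ k = 1) (hnil : Group.IsNilpotent (closure S)) :
    IsPGroup p (closure S) := by
  obtain ⟨P⟩ : Nonempty (Sylow p (closure S)) := inferInstance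
  refine (P.isPGroup'.map (closure S).subtype).to_le ((closure_le _).mpr fun s hs => ?_)
  obtain ⟨k, hk⟩ := hS s hs
  exact ⟨⟨s, subset_closure hs⟩, P.mem_of_pow_eq_one (Subtype.ext (by simpa using hk)), rfl⟩

theorem Subgroup.eq_bot_of_le_commutator_of_isNilpotent {N H : Subgroup G}
    [Group.IsNilpotent H] (hNH : N ≤ H) (h : N ≤ ⁅N, H⁆) : N = ⊥ := by
  have hseries : ∀ i, N ≤ H.lowerCentralSeries i := by
    intro i
    induction i with
    | zero => exact hNH
    | succ i ih => exact h.trans (commutator_mono ih le_rfl)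
  obtain ⟨n, hn⟩ := (isNilpotent_iff_lowerCentralSeries H).mp ‹_›
  exact le_bot_iff.mp (hn ▸ hseries n)

theorem Subgroup.commutator_top_le_of_centralizer_sup_eq_top {N H : Subgroup G} [N.Normal]
    (hsup : centralizer N ⊔ H = ⊤) : ⁅N, ⊤⁆ ≤ ⁅N, H⁆ := by
  rw [commutator_le]
  intro n hn g _
  have hg : g ∈ ((centralizer N ⊔ H : Subgroup G) : Set G) := hsup ▸ mem_top g
  rw [normal_mul] at hg
  obtain ⟨c, hc, u, hu, rfl⟩ := hg
  have hnu : ⁅n, u⁆ ∈ ⁅N, H⁆ := commutator_mem_commutator hn hu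
  have hcn : n * c = c * n := mem_centralizer_iff.mp hc n hn
  have hcnu : ⁅n, u⁆ * c = c * ⁅n, u⁆ :=
    mem_centralizer_iff.mp hc _ (commutator_le_left N H hnu)
  have : ⁅n, c * u⁆ = ⁅n, u⁆ :=
    calc ⁅n, c * u⁆ = n * c * u * n⁻¹ * u⁻¹ * c⁻¹ := by group
      _ = c * ⁅n, u⁆ * c⁻¹ := by rw [hcn, commutatorElement_def]; group
      _ = ⁅n, u⁆ := by rw [← hcnu, mul_inv_cancel_right]
  rwa [this]

theorem Subgroup.le_upperCentralSeries_card [Finite G] {N H : Subgroup G} [N.Normal]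
    [Group.IsNilpotent H] (hNH : N ≤ H) (hsup : centralizer N ⊔ H = ⊤) :
    N ≤ upperCentralSeries G (Nat.card N) := by
  induction hn : Nat.card N using Nat.strong_induction_on generalizing N with
  | _ n ih =>
  obtain rfl | hbot := eq_or_ne N ⊥
  · exact bot_le
  have hlt : ⁅N, (⊤ : Subgroup G)⁆ < N := (commutator_le_left N ⊤).lt_of_ne fun heq =>
    hbot (eq_bot_of_le_commutator_of_isNilpotent hNH
      (heq.ge.trans (commutator_top_le_of_centralizer_sup_eq_top hsup)))
  have hcard : Nat.card ↥⁅N, (⊤ : Subgroup G)⁆ < n := by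
    have := Set.ncard_strictMono (SetLike.coe_strictMono hlt)
    rwa [← Nat.card_coe_set_eq, ← Nat.card_coe_set_eq, SetLike.coe_sort_coe, SetLike.coe_sort_coe,
      hn] at this
  have hcomm := ih _ hcard (hlt.le.trans hNH)
    (top_unique (hsup.ge.trans (sup_le_sup_right (centralizer_le hlt.le) H))) rfl
  intro x hx
  refine upperCentralSeries_mono G hcard (mem_upperCentralSeries_succ_iff.mpr fun y => ?_)
  exact hcomm (commutator_mem_commutator hx (mem_top y))

theorem Subgroup.conj_mem_closure {S : Set G} {c : G}
    (hS : ∀ s ∈ S, c * s * c⁻¹ ∈ closure S) {d : G} (hd : d ∈ closure S) :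
    c * d * c⁻¹ ∈ closure S := by
  have hmap : (closure S).map (MulAut.conj c).toMonoidHom ≤ closure S := by
    rw [MonoidHom.map_closure, closure_le]
    rintro _ ⟨s, hs, rfl⟩
    exact hS s hs
  exact hmap ⟨d, hd, rfl⟩

theorem Subgroup.normal_of_conj_mem_of_forall_eq_mul {A B N : Subgroup G}
    (hG : ∀ g : G, ∃ a ∈ A, ∃ b ∈ B, g = a * b) (hA : ∀ a ∈ A, ∀ n ∈ N, a * n * a⁻¹ ∈ N)
    (hB : ∀ b ∈ B, ∀ n ∈ N, b * n * b⁻¹ ∈ N) : N.Normal where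
  conj_mem n hn g := by
    obtain ⟨a, ha, b, hb, rfl⟩ := hG g
    simpa only [mul_inv_rev, mul_assoc] using hA a ha _ (hB b hb n hn)

theorem Subgroup.normalClosure_le_of_sup_eq_top {D H : Subgroup G} [D.Normal] (hDH : D ⊔ H = ⊤)
    {x : G} (hxH : x ∈ H) (hxD : x ∈ centralizer D) : normalClosure {x} ≤ H := by
  refine (closure_le _).mpr fun c hc => ?_
  obtain ⟨y, hy, hconj⟩ := Group.mem_conjugatesOfSet_iff.mp hc
  rw [Set.mem_singleton_iff.mp hy] at hconj
  obtain ⟨g, rfl⟩ := isConj_iff.mp hconj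
  have hg : g ∈ ((H ⊔ D : Subgroup G) : Set G) := (sup_comm D H ▸ hDH) ▸ mem_top g
  rw [mul_normal] at hg
  obtain ⟨u, hu, d, hd, rfl⟩ := hg
  have hdx : d * x * d⁻¹ = x := by rw [mem_centralizer_iff.mp hxD d hd, mul_inv_cancel_right]
  have : u * d * x * (u * d)⁻¹ = u * (d * x * d⁻¹) * u⁻¹ := by group
  rw [SetLike.mem_coe, this, hdx]
  exact H.mul_mem (H.mul_mem hu hxH) (H.inv_mem hu)

theorem Subgroup.sup_eq_top_of_isPGroup_quotient [Finite G] {p : ℕ} [Fact p.Prime]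
    {D : Subgroup G} [D.Normal] (hD : IsPGroup p (G ⧸ D)) (P : Sylow p G) : D ⊔ P = ⊤ := by
  obtain ⟨m, hm⟩ := IsPGroup.iff_card.mp hD
  rw [← index_eq_one]
  refine Nat.eq_one_of_dvd_coprimes ?_ (index_dvd_of_le le_sup_left) (index_dvd_of_le le_sup_right)
  rw [index_eq_card, hm]
  exact Nat.Coprime.pow_left m ((Nat.Prime.coprime_iff_not_dvd Fact.out).mpr P.not_dvd_index)

def NConnected (A B : Subgroup G) : Prop :=
  ∀ a ∈ A, ∀ b ∈ B, Group.IsNilpotent (closure {a, b})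

def pPrimeElements (p : ℕ) (A B : Subgroup G) : Set G :=
  {g | (g ∈ A ∨ g ∈ B) ∧ ¬ p ∣ orderOf g}

theorem pPrimeElements_comm (p : ℕ) (A B : Subgroup G) :
    pPrimeElements p A B = pPrimeElements p B A := by
  simp only [pPrimeElements, or_comm]

namespace NConnected

variable {A B : Subgroup G}

theorem symm (h : NConnected A B) : NConnected B A :=
  fun b hb a ha => Set.pair_comm a b ▸ h a ha b hb

variable [Finite G] {p : ℕ}

theorem commute (h : NConnected A B) (hp : p.Prime) {a b : G} (ha : a ∈ A) (hb : b ∈ B)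
    {k : ℕ} (hak : a ^ p ^ k = 1) (hpb : ¬ p ∣ orderOf b) : Commute a b :=
  commute_of_isNilpotent_closure_pair hp (h a ha b hb) hak hpb

theorem conj_mem_closure_pPrimeElements (h : NConnected A B) (hp : p.Prime) {c s : G}
    (hc : c ∈ A) (hs : s ∈ pPrimeElements p A B) :
    c * s * c⁻¹ ∈ closure (pPrimeElements p A B) := by
  obtain ⟨hsA | hsB, hps⟩ := hs
  · refine subset_closure ⟨Or.inl (A.mul_mem (A.mul_mem hc hsA) (A.inv_mem hc)), ?_⟩
    rwa [← SemiconjBy.orderOf_eq c (x := s) (by simp [SemiconjBy])]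
  obtain ⟨z, hz, y, hy, rfl, hpz, k, hyk⟩ := (isOfFinOrder_of_finite c).exists_eq_mul_of_prime hp
  have hys : y * s * y⁻¹ = s := (h.commute hp (zpowers_le.mpr hc hy) hsB hyk hps).mul_inv_cancel
  have hzD : z ∈ closure (pPrimeElements p A B) :=
    subset_closure ⟨Or.inl (zpowers_le.mpr hc hz), hpz⟩
  have hsD : s ∈ closure (pPrimeElements p A B) := subset_closure ⟨Or.inr hsB, hps⟩
  have : z * y * s * (z * y)⁻¹ = z * (y * s * y⁻¹) * z⁻¹ := by group
  rw [this, hys]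
  exact mul_mem (mul_mem hzD hsD) (inv_mem hzD)

theorem normal_closure_pPrimeElements (h : NConnected A B)
    (hG : ∀ g : G, ∃ a ∈ A, ∃ b ∈ B, g = a * b) (hp : p.Prime) :
    (closure (pPrimeElements p A B)).Normal :=
  normal_of_conj_mem_of_forall_eq_mul hG
    (fun _ ha _ => conj_mem_closure fun _ hs => h.conj_mem_closure_pPrimeElements hp ha hs)
    (fun _ hb _ => by
      rw [pPrimeElements_comm]
      exact conj_mem_closure fun _ hs => h.symm.conj_mem_closure_pPrimeElements hp hb hs)

theorem isPGroup_quotient_closure_pPrimeElements (h : NConnected A B)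
    (hG : ∀ g : G, ∃ a ∈ A, ∃ b ∈ B, g = a * b) (hp : p.Prime)
    [(closure (pPrimeElements p A B)).Normal] :
    IsPGroup p (G ⧸ closure (pPrimeElements p A B)) := by
  have := Fact.mk hp
  intro g
  obtain ⟨g, rfl⟩ := QuotientGroup.mk_surjective g
  obtain ⟨a, ha, b, hb, rfl⟩ := hG g
  obtain ⟨za, hza, ya, hya, rfl, hpza, i, hyai⟩ :=
    (isOfFinOrder_of_finite a).exists_eq_mul_of_prime hp
  obtain ⟨zb, hzb, yb, hyb, rfl, hpzb, j, hybj⟩ :=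
    (isOfFinOrder_of_finite b).exists_eq_mul_of_prime hp
  have hza1 : (za : G ⧸ closure (pPrimeElements p A B)) = 1 := (QuotientGroup.eq_one_iff za).mpr
    (subset_closure ⟨Or.inl (zpowers_le.mpr ha hza), hpza⟩)
  have hzb1 : (zb : G ⧸ closure (pPrimeElements p A B)) = 1 := (QuotientGroup.eq_one_iff zb).mpr
    (subset_closure ⟨Or.inr (zpowers_le.mpr hb hzb), hpzb⟩)
  obtain ⟨k, hk⟩ := isPGroup_closure_of_isNilpotent (S := {ya, yb})
    (by rintro s (rfl | rfl); exacts [⟨i, hyai⟩, ⟨j, hybj⟩])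
    (h ya (zpowers_le.mpr ha hya) yb (zpowers_le.mpr hb hyb))
    ⟨ya * yb, mul_mem (subset_closure (by simp)) (subset_closure (by simp))⟩
  have hk' : (ya * yb) ^ p ^ k = 1 := by simpa using congrArg Subtype.val hk
  refine ⟨k, ?_⟩
  rw [QuotientGroup.mk_mul, QuotientGroup.mk_mul, QuotientGroup.mk_mul, hza1, hzb1, one_mul,
    one_mul, ← QuotientGroup.mk_mul, ← QuotientGroup.mk_pow, hk', QuotientGroup.mk_one]

theorem mem_upperCentralSeries_of_pow_eq_one (h : NConnected A B)
    (hG : ∀ g : G, ∃ a ∈ A, ∃ b ∈ B, g = a * b) (hp : p.Prime) {x : G} (hxA : x ∈ A)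
    (hxB : x ∈ B) {k : ℕ} (hx : x ^ p ^ k = 1) :
    x ∈ Subgroup.upperCentralSeries G (Nat.card G) := by
  have := Fact.mk hp
  have := h.normal_closure_pPrimeElements hG hp
  have hSx : pPrimeElements p A B ⊆ centralizer {x} := by
    rintro s ⟨hsA | hsB, hps⟩ <;> refine mem_centralizer_singleton_iff.mpr (Commute.eq ?_).symm
    exacts [h.symm.commute hp hxB hsA hx hps, h.commute hp hxA hsB hx hps]
  have hxD : x ∈ centralizer (closure (pPrimeElements p A B)) :=
    mem_centralizer_iff.mpr fun d hd => mem_centralizer_singleton_iff.mp ((closure_le _).mpr hSx hd)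
  obtain ⟨P, hxP⟩ := (isPGroup_zpowers_of_pow_eq_one hx).exists_le_sylow
  have hDP : closure (pPrimeElements p A B) ⊔ P = ⊤ :=
    sup_eq_top_of_isPGroup_quotient (h.isPGroup_quotient_closure_pPrimeElements hG hp) P
  have hNP : normalClosure {x} ≤ P := normalClosure_le_of_sup_eq_top hDP (hxP (mem_zpowers x)) hxD
  have hND : normalClosure {x} ≤ centralizer (closure (pPrimeElements p A B)) :=
    normalClosure_le_normal (Set.singleton_subset_iff.mpr hxD)
  have hDN : closure (pPrimeElements p A B) ≤ centralizer (normalClosure {x} : Set G) :=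
    le_centralizer_iff.mp hND
  have hsup : centralizer (normalClosure {x} : Set G) ⊔ P = ⊤ :=
    top_unique (hDP.ge.trans (sup_le_sup_right hDN _))
  have := P.isPGroup'.isNilpotent
  exact Subgroup.upperCentralSeries_mono G (card_le_card_group _)
    (le_upperCentralSeries_card hNP hsup (subset_normalClosure rfl))

end NConnected

end

theorem stmt_10 {G : Type*} [Group G] [Finite G] (A B : Subgroup G)
    (hG : ∀ g : G, ∃ a ∈ A, ∃ b ∈ B, g = a * b)
    (hconn : ∀ a ∈ A, ∀ b ∈ B, Group.IsNilpotent (Subgroup.closure {a, b})) :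
    A ⊓ B ≤ upperCentralSeries G (Nat.card G) := by
  rintro x ⟨hxA, hxB⟩
  refine Subgroup.mem_of_forall_primePow_mem fun p k hp y hy hyk => ?_
  exact NConnected.mem_upperCentralSeries_of_pow_eq_one hconn hG hp
    (Subgroup.zpowers_le.mpr hxA hy) (Subgroup.zpowers_le.mpr hxB hy) hyk
end

section
/- Let G be a finite group, A, B ≤ G with G = AB, and suppose [A, B] ≤ F(G), the Fitting subgroup of G. Then for all a ∈ A and b ∈ B, the subgroup ⟨a, b⟩ has nilpotent derived subgroup. -/
/-- The Fitting subgroup: the join of all nilpotent normal subgroups. -/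
def FittingSubgroup (G : Type*) [Group G] : Subgroup G :=
  ⨆ N : {N : Subgroup G // N.Normal ∧ Group.IsNilpotent N}, (N : Subgroup G)

/-!
The images of `a` and `b` in `G ⧸ F(G)` commute, so `⟨a, b⟩' ≤ F(G)`, and it remains to see that
`F(G)` is nilpotent. A nilpotent normal subgroup `N` is generated by its Sylow subgroups, each of
which is characteristic in `N`, hence a normal `p`-subgroup of `G` and so contained in the largest
one, `O_p(G)`. Thus `F(G) ≤ ∏_p O_p(G)`, and the `O_p(G)` for distinct `p` commute elementwise,
so this product is an image of a direct product of `p`-groups.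
-/

open scoped commutatorElement

namespace Subgroup

variable {G : Type*} [Group G]

theorem isNilpotent_of_le {H K : Subgroup G} (h : H ≤ K) [Group.IsNilpotent K] :
    Group.IsNilpotent H :=
  Group.nilpotent_of_mulEquiv (subgroupOfEquivOfLe h)

theorem commutator_closure_pair_le {N : Subgroup G} [N.Normal] {a b : G} (h : ⁅a, b⁆ ∈ N) :
    ⁅closure {a, b}, closure {a, b}⁆ ≤ N := by
  rw [← QuotientGroup.ker_mk' N, ← map_eq_bot_iff, map_commutator, MonoidHom.map_closure,
    Set.image_pair, commutator_self_eq_bot_iff]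
  have hab : Commute (QuotientGroup.mk' N a) (QuotientGroup.mk' N b) := by
    rwa [← commutatorElement_eq_one_iff_commute, ← map_commutatorElement,
      ← MonoidHom.mem_ker, QuotientGroup.ker_mk']
  apply isMulCommutative_closure
  rintro x (rfl | rfl) y (rfl | rfl)
  exacts [rfl, hab.eq, hab.eq.symm, rfl]

theorem eq_top_of_forall_sylow_le [Finite G] (K : Subgroup G)
    (h : ∀ (p : ℕ) [Fact p.Prime], p ∣ Nat.card G → ∀ P : Sylow p G, ↑P ≤ K) : K = ⊤ := by
  rw [← index_eq_one, Nat.eq_one_iff_not_exists_prime_dvd]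
  intro p hp hpK
  have := Fact.mk hp
  have hP : (default : Sylow p G) ≤ K := h p (hpK.trans K.index_dvd_card) default
  exact (default : Sylow p G).not_dvd_index (hpK.trans (index_dvd_of_le hP))

end Subgroup

open Subgroup

section NormalPCore

variable (G : Type*) [Group G]

def normalPCore (p : ℕ) : Subgroup G := sSup {P | P.Normal ∧ IsPGroup p P}

variable {G}

theorem supClosed_normal_isPGroup (p : ℕ) :
    SupClosed {P : Subgroup G | P.Normal ∧ IsPGroup p P} := by
  rintro P ⟨hP, hPp⟩ Q ⟨hQ, hQp⟩
  exact ⟨Subgroup.sup_normal P Q, hPp.to_sup_of_normal_right hQp⟩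

theorem le_normalPCore {p : ℕ} {P : Subgroup G} (hP : P.Normal) (hPp : IsPGroup p P) :
    P ≤ normalPCore G p :=
  le_sSup ⟨hP, hPp⟩

variable [Finite G]

theorem normalPCore_normal_isPGroup (p : ℕ) :
    (normalPCore G p).Normal ∧ IsPGroup p (normalPCore G p) :=
  (supClosed_normal_isPGroup p).sSup_mem (Set.toFinite _) ⟨inferInstance, IsPGroup.of_bot⟩
    subset_rfl

theorem isNilpotent_iSup_of_isPGroup (s : Finset ℕ) (hs : ∀ p ∈ s, p.Prime)
    (H : ℕ → Subgroup G) (hH : ∀ p, (H p).Normal) (hHp : ∀ p, IsPGroup p (H p)) :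
    Group.IsNilpotent ↥(⨆ p : s, H p) := by
  have hprime (p : s) : Fact (p : ℕ).Prime := ⟨hs p p.2⟩
  have hcomm : Pairwise fun p q : s => ∀ x y : G, x ∈ H p → y ∈ H q → Commute x y :=
    fun p q hpq => commute_of_normal_of_disjoint _ _ (hH p) (hH q)
      (IsPGroup.disjoint_of_ne p q (Subtype.val_injective.ne hpq) _ _ (hHp p) (hHp q))
  have (p : s) : Group.IsNilpotent (H p) := (hHp p).isNilpotent
  rw [← noncommPiCoprod_range (hcomm := hcomm)]
  exact Group.nilpotent_of_surjective _ (noncommPiCoprod hcomm).rangeRestrict_surjective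

theorem map_subtype_sylow_le_normalPCore {N : Subgroup G} [N.Normal] [Group.IsNilpotent N]
    {p : ℕ} [Fact p.Prime] (P : Sylow p N) : (P : Subgroup N).map N.subtype ≤ normalPCore G p :=
  have := Sylow.characteristic_of_normal P inferInstance
  le_normalPCore inferInstance (P.isPGroup'.map _)

end NormalPCore

section Fitting

variable {G : Type*} [Group G]

instance FittingSubgroup.normal : (FittingSubgroup G).Normal :=
  have (N : {N : Subgroup G // N.Normal ∧ Group.IsNilpotent N}) : (N : Subgroup G).Normal := N.2.1
  iSup_normal _

theorem FittingSubgroup.le_iSup_normalPCore [Finite G] :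
    FittingSubgroup G ≤ ⨆ p : (Nat.card G).primeFactors, normalPCore G p := by
  refine iSup_le fun ⟨N, hN, hNnil⟩ => ?_
  rw [← subgroupOf_eq_top]
  refine eq_top_of_forall_sylow_le _ fun p _ hpN P => ?_
  have hpG : p ∈ (Nat.card G).primeFactors :=
    Nat.mem_primeFactors.mpr ⟨Fact.out, hpN.trans N.card_subgroup_dvd_card, Nat.card_pos.ne'⟩
  rw [subgroupOf, ← map_le_iff_le_comap]
  exact (map_subtype_sylow_le_normalPCore P).trans
    (le_iSup (fun p : (Nat.card G).primeFactors => normalPCore G p) ⟨p, hpG⟩)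

instance FittingSubgroup.isNilpotent [Finite G] : Group.IsNilpotent (FittingSubgroup G) :=
  have := isNilpotent_iSup_of_isPGroup (Nat.card G).primeFactors
    (fun _ => Nat.prime_of_mem_primeFactors) (normalPCore G)
    (fun p => (normalPCore_normal_isPGroup (G := G) p).1)
    (fun p => (normalPCore_normal_isPGroup p).2)
  isNilpotent_of_le FittingSubgroup.le_iSup_normalPCore

end Fitting

theorem stmt_12_general {G : Type*} [Group G] [Finite G] (A B : Subgroup G)
    (hcomm : ⁅A, B⁆ ≤ FittingSubgroup G) :
    ∀ a ∈ A, ∀ b ∈ B,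
      Group.IsNilpotent
        ↥⁅Subgroup.closure {a, b}, Subgroup.closure {a, b}⁆ := by
  intro a ha b hb
  exact isNilpotent_of_le (commutator_closure_pair_le (hcomm (commutator_mem_commutator ha hb)))

theorem stmt_12 {G : Type*} [Group G] [Finite G] (A B : Subgroup G)
    (hG : ∀ g : G, ∃ a ∈ A, ∃ b ∈ B, g = a * b)
    (hcomm : ⁅A, B⁆ ≤ FittingSubgroup G) :
    ∀ a ∈ A, ∀ b ∈ B,
      Group.IsNilpotent
        ↥⁅Subgroup.closure {a, b}, Subgroup.closure {a, b}⁆ :=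
  stmt_12_general A B hcomm
end
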